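/- Let a₀ ∈ ℝ, let b : ℝ → ℝ be a continuous 2π-periodic function with mean b₀ = (1/2π)∫₀^{2π} b(y) dy, set c₀ = a₀ + i·b₀, and let ξ ∈ ℤ be such that e^{2πi·ξ·c₀} ≠ 1. Let g : ℝ → ℂ be a continuous 2π-periodic function. Define H̃(t, τ) = a₀·τ + i·∫_{t}^{t+τ} b(y) dy and ũ(t) = (e^{2πi·ξ·c₀} − 1)^{−1} · ∫₀^{2π} e^{i·ξ·H̃(t, τ)} · g(t + τ) dτ. Then ũ is 2π-periodic, continuously differentiable, and satisfies ũ′(t) + i·ξ·(a₀ + i·b(t))·ũ(t) = g(t) for all t ∈ ℝ; consequently ũ coincides with the function u(t) = (1 − e^{−2πi·ξ·c₀})^{−1} · ∫₀^{2π} e^{−i·ξ·(a₀τ + i∫_{t−τ}^{t} b)} · g(t − τ) dτ. -/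

import Mathlib

/-!
Put `φ(t) = iξ(a₀t + i∫₀ᵗ b)`, so that `φ' = iξ(a₀ + ib)`, `φ(t + 2π) = φ(t) + 2πiξc₀` and the
integrand of `ũ` is `e^{φ(t+τ) - φ(t)} g(t+τ)`; hence `ũ(t) = (e^{2πiξc₀} - 1)⁻¹ e^{-φ(t)} V(t)`
with `V(t) = ∫_t^{t+2π} e^φ g`. Since `e^φ g` gets multiplied by `e^{2πiξc₀}` under a shift by
`2π`, `V'(t) = (e^{2πiξc₀} - 1) e^{φ(t)} g(t)`, which is the differential equation, and
`∫_{t-2π}^t e^φ g = e^{-2πiξc₀} V(t)`, which is the second formula.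
-/

open Real Complex intervalIntegral

section PeriodicSolution

variable {E : Type*} [NormedAddCommGroup E] [NormedSpace ℝ E] [CompleteSpace E] {T : ℝ}

theorem hasDerivAt_integral_self_add {G : ℝ → E} (hG : Continuous G) (t : ℝ) :
    HasDerivAt (fun t => ∫ s in t..t + T, G s) (G (t + T) - G t) t := by
  have hdiff : (fun t => ∫ s in t..t + T, G s) =
      fun t => (∫ s in 0..t + T, G s) - ∫ s in 0..t, G s :=
    funext fun t => (integral_interval_sub_left (hG.intervalIntegrable _ _)
      (hG.intervalIntegrable _ _)).symm
  rw [hdiff]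
  exact ((hG.integral_hasStrictDerivAt 0 (t + T)).hasDerivAt.comp_add_const t T).sub
    (hG.integral_hasStrictDerivAt 0 t).hasDerivAt

theorem integral_self_add_eq_mul {G : ℝ → ℂ} {k : ℂ} (hG : ∀ s, G (s + T) = k * G s) (t : ℝ) :
    ∫ s in t..t + T, G s = k * ∫ s in t - T..t, G s := by
  simp_rw [← integral_const_mul, ← hG]
  rw [integral_comp_add_right, sub_add_cancel]

/-- Variation of constants over one period, normalised by `(e^c - 1)⁻¹` so that it solves
`u' + φ' u = g` when `φ (t + T) = φ t + c`. -/
noncomputable def periodicSolution (T : ℝ) (c : ℂ) (φ g : ℝ → ℂ) (t : ℝ) : ℂ :=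
  (cexp c - 1)⁻¹ * ∫ τ in 0..T, cexp (φ (t + τ) - φ t) * g (t + τ)

variable {c : ℂ} {φ φ' g : ℝ → ℂ}

theorem periodicSolution_eq_mul_integral (t : ℝ) :
    periodicSolution T c φ g t =
      (cexp c - 1)⁻¹ * (cexp (-φ t) * ∫ s in t..t + T, cexp (φ s) * g s) := by
  have hshift := integral_comp_add_left (fun s => cexp (φ s) * g s) t (a := 0) (b := T)
  rw [add_zero] at hshift
  rw [periodicSolution, ← hshift, ← integral_const_mul (cexp (-φ t))]
  congr 1
  refine integral_congr fun τ _ => ?_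
  rw [sub_eq_neg_add, Complex.exp_add, mul_assoc]

theorem periodicSolution_add_period (hφ : ∀ s, φ (s + T) = φ s + c)
    (hg : Function.Periodic g T) (t : ℝ) :
    periodicSolution T c φ g (t + T) = periodicSolution T c φ g t := by
  unfold periodicSolution
  congr 2 with τ
  rw [add_right_comm, hφ, hφ, hg, add_sub_add_right_eq_sub]

theorem hasDerivAt_periodicSolution (hφ' : ∀ s, HasDerivAt φ (φ' s) s)
    (hφ : ∀ s, φ (s + T) = φ s + c) (hg : Continuous g) (hgper : Function.Periodic g T)
    (hc : cexp c ≠ 1) (t : ℝ) :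
    HasDerivAt (periodicSolution T c φ g) (g t - φ' t * periodicSolution T c φ g t) t := by
  have hG : Continuous fun s => cexp (φ s) * g s :=
    (continuous_exp.comp (continuous_iff_continuousAt.2 fun s => (hφ' s).continuousAt)).mul hg
  have hsol := (((hφ' t).neg.cexp).mul (hasDerivAt_integral_self_add (T := T) hG t)).const_mul
    (cexp c - 1)⁻¹
  refine (hsol.congr_of_eventuallyEq
    (Filter.Eventually.of_forall fun s => periodicSolution_eq_mul_integral s)).congr_deriv ?_
  have hc' : cexp c - 1 ≠ 0 := sub_ne_zero.2 hc
  simp only [Pi.neg_apply]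
  rw [periodicSolution_eq_mul_integral, hφ, hgper, Complex.exp_add, Complex.exp_neg]
  field_simp
  ring

theorem contDiff_periodicSolution (hφ' : ∀ s, HasDerivAt φ (φ' s) s) (hφ'c : Continuous φ')
    (hφ : ∀ s, φ (s + T) = φ s + c) (hg : Continuous g) (hgper : Function.Periodic g T)
    (hc : cexp c ≠ 1) : ContDiff ℝ 1 (periodicSolution T c φ g) := by
  have hderiv := hasDerivAt_periodicSolution hφ' hφ hg hgper hc
  have hdiff : Differentiable ℝ (periodicSolution T c φ g) := fun t => (hderiv t).differentiableAt
  rw [contDiff_one_iff_deriv, funext fun t => (hderiv t).deriv]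
  exact ⟨hdiff, hg.sub (hφ'c.mul hdiff.continuous)⟩

theorem periodicSolution_eq_backward (hφ : ∀ s, φ (s + T) = φ s + c)
    (hgper : Function.Periodic g T) (hc : cexp c ≠ 1) (t : ℝ) :
    periodicSolution T c φ g t =
      (1 - cexp (-c))⁻¹ * ∫ τ in 0..T, cexp (φ (t - τ) - φ t) * g (t - τ) := by
  have hG : ∀ s, cexp (φ (s + T)) * g (s + T) = cexp c * (cexp (φ s) * g s) := fun s => by
    rw [hφ, hgper, Complex.exp_add]; ring
  have hc' : cexp c - 1 ≠ 0 := sub_ne_zero.2 hc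
  have hback : ∫ τ in 0..T, cexp (φ (t - τ) - φ t) * g (t - τ) =
      cexp (-φ t) * ∫ s in t - T..t, cexp (φ s) * g s := by
    have hshift := integral_comp_sub_left (fun s => cexp (φ s) * g s) t (a := 0) (b := T)
    rw [sub_zero] at hshift
    rw [← hshift, ← integral_const_mul]
    congr 1 with τ
    rw [sub_eq_neg_add, Complex.exp_add, mul_assoc]
  rw [hback, periodicSolution_eq_mul_integral, integral_self_add_eq_mul hG, Complex.exp_neg,
    Complex.exp_neg]
  field_simp

end PeriodicSolution

section Phase

variable {a₀ : ℝ} {b : ℝ → ℝ} {ξ : ℂ}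

noncomputable def phase (a₀ : ℝ) (b : ℝ → ℝ) (ξ : ℂ) (t : ℝ) : ℂ :=
  I * ξ * ((a₀ * t : ℝ) + I * ((∫ y in 0..t, b y : ℝ) : ℂ))

theorem hasDerivAt_phase (hb : Continuous b) (t : ℝ) :
    HasDerivAt (phase a₀ b ξ) (I * ξ * (a₀ + I * b t)) t := by
  have hlin : HasDerivAt (fun t : ℝ => ((a₀ * t : ℝ) : ℂ)) a₀ t := by
    simpa using ((hasDerivAt_id t).const_mul a₀).ofReal_comp
  exact (hlin.add ((hb.integral_hasStrictDerivAt 0 t).hasDerivAt.ofReal_comp.const_mul I)).const_mul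
    (I * ξ)

theorem phase_sub_phase (hb : Continuous b) (s t : ℝ) :
    phase a₀ b ξ t - phase a₀ b ξ s =
      I * ξ * ((a₀ * (t - s) : ℝ) + I * ((∫ y in s..t, b y : ℝ) : ℂ)) := by
  rw [phase, phase, ← integral_interval_sub_left (hb.intervalIntegrable 0 t)
    (hb.intervalIntegrable 0 s)]
  push_cast
  ring

theorem phase_add_period (hb : Continuous b) (hbper : Function.Periodic b T) (t : ℝ) :
    phase a₀ b ξ (t + T) = phase a₀ b ξ t + phase a₀ b ξ T := by
  have hint := hbper.intervalIntegral_add_eq_add 0 t fun _ _ => hb.intervalIntegrable _ _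
  rw [zero_add] at hint
  rw [phase, phase, phase, hint]
  push_cast
  ring

end Phase

/-- Explicit solution formula (4.2): with `H̃(t,τ) = a₀τ + i∫_t^{t+τ} b`, the function
`ũ(t) = (e^{2πiξc₀}-1)⁻¹ ∫₀^{2π} e^{iξH̃(t,τ)} g(t+τ) dτ` is `2π`-periodic, `C¹`, solves
`ũ' + iξ(a₀ + ib(t))ũ = g`, and coincides with the solution given by formula (4.1). -/
theorem stmt_7 (a₀ : ℝ) (b : ℝ → ℝ) (hb : Continuous b)
    (hbper : ∀ t, b (t + 2 * π) = b t)
    (b₀ : ℝ) (hb₀ : b₀ = (1 / (2 * π)) * ∫ y in (0:ℝ)..(2 * π), b y)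
    (c₀ : ℂ) (hc₀ : c₀ = (a₀ : ℂ) + Complex.I * (b₀ : ℂ))
    (ξ : ℤ) (hξ : Complex.exp (((2 * π : ℝ) : ℂ) * Complex.I * (ξ : ℂ) * c₀) ≠ 1)
    (g : ℝ → ℂ) (hg : Continuous g) (hgper : ∀ t, g (t + 2 * π) = g t)
    (ut : ℝ → ℂ)
    (hut : ∀ t, ut t = (Complex.exp (((2 * π : ℝ) : ℂ) * Complex.I * (ξ : ℂ) * c₀) - 1)⁻¹ *
      ∫ τ in (0:ℝ)..(2 * π),
        Complex.exp (Complex.I * (ξ : ℂ) *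
          (((a₀ * τ : ℝ) : ℂ) + Complex.I * (((∫ y in t..(t + τ), b y) : ℝ) : ℂ))) *
        g (t + τ))
    (u : ℝ → ℂ)
    (hu : ∀ t, u t = (1 - Complex.exp (-(((2 * π : ℝ) : ℂ) * Complex.I * (ξ : ℂ) * c₀)))⁻¹ *
      ∫ τ in (0:ℝ)..(2 * π),
        Complex.exp (-(Complex.I * (ξ : ℂ) *
          (((a₀ * τ : ℝ) : ℂ) + Complex.I * (((∫ y in (t - τ)..t, b y) : ℝ) : ℂ)))) *
        g (t - τ)) :
    (∀ t, ut (t + 2 * π) = ut t) ∧ ContDiff ℝ 1 ut ∧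
    (∀ t, deriv ut t + Complex.I * (ξ : ℂ) * ((a₀ : ℂ) + Complex.I * (b t : ℂ)) * ut t = g t) ∧
    (∀ t, ut t = u t) := by
  have hφ (s : ℝ) : phase a₀ b ξ (s + 2 * π) =
      phase a₀ b ξ s + ((2 * π : ℝ) : ℂ) * I * ξ * c₀ := by
    rw [phase_add_period hb hbper]
    congr 1
    rw [phase, hc₀, hb₀]
    push_cast
    field_simp
  have hut_eq :
      ut = periodicSolution (2 * π) (((2 * π : ℝ) : ℂ) * I * ξ * c₀) (phase a₀ b ξ) g := by
    funext t
    rw [hut, periodicSolution]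
    congr 2 with τ
    rw [phase_sub_phase hb, add_sub_cancel_left]
  have hderiv := hasDerivAt_periodicSolution (hasDerivAt_phase hb) hφ hg hgper hξ
  subst hut_eq
  refine ⟨periodicSolution_add_period hφ hgper,
    contDiff_periodicSolution (hasDerivAt_phase hb) (by fun_prop) hφ hg hgper hξ,
    fun t => ?_, fun t => ?_⟩
  · rw [(hderiv t).deriv]
    ring
  · rw [periodicSolution_eq_backward hφ hgper hξ, hu]
    congr 2 with τ
    rw [← neg_sub, phase_sub_phase hb, sub_sub_cancel]
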